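/- arXiv:1411.0526 — 6 statements merged into one kernel-verified Lean document; each statement's English description precedes it below -/
import Mathlib

section
/- Let V, W be ℂ-vector spaces, let M = (M₁,...,Mₛ) ∈ Hom(V,W)ˢ, and suppose the rank of M is at least r for some natural number r. Then there exists a finite-dimensional subspace U ⊆ V such that the tuple of restrictions (M₁|_U,...,Mₛ|_U) ∈ Hom(U,W)ˢ also has rank at least r. -/
/-!
For `v ∈ Vʳ` and `φ ∈ (W*)ʳ` the minor `det (φ i (M_λ (v j)))` of `M_λ = ∑ λₖ Mₖ` is a polynomial
in `λ`, and `r ≤ rank M_λ` exactly when one of these minors does not vanish at `λ`. By Hilbert's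
basis theorem finitely many of the minors already have the same common zeros as all of them, so
the span `U` of the finitely many vectors `v j` they involve works.
-/

open MvPolynomial

theorem Ideal.exists_finset_forall_mem_span_image {R α : Type*} [CommSemiring R]
    [IsNoetherianRing R] (f : α → R) : ∃ F : Finset α, ∀ a, f a ∈ Ideal.span (f '' F) := by
  classical
  obtain ⟨T, hT, hspan⟩ := (Submodule.fg_span_iff_fg_span_finset_subset (Set.range f)).mp
    (IsNoetherian.noetherian (Ideal.span (Set.range f)))
  rw [← Set.image_univ, Finset.subset_set_image_iff] at hT
  obtain ⟨F, -, rfl⟩ := hT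
  refine ⟨F, fun a => ?_⟩
  rw [Ideal.span, ← Finset.coe_image, ← hspan]
  exact Submodule.subset_span ⟨a, rfl⟩

theorem RingHom.exists_finset_forall_map_eq_zero {R S α : Type*} [CommSemiring R]
    [IsNoetherianRing R] [Semiring S] (f : α → R) :
    ∃ F : Finset α, ∀ g : R →+* S, (∀ a ∈ F, g (f a) = 0) → ∀ a, g (f a) = 0 := by
  obtain ⟨F, hF⟩ := Ideal.exists_finset_forall_mem_span_image f
  refine ⟨F, fun g hg a => ?_⟩
  have hker : Ideal.span (f '' F) ≤ RingHom.ker g := Ideal.span_le.mpr <| by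
    rintro _ ⟨b, hb, rfl⟩
    exact RingHom.mem_ker.mpr (hg b hb)
  exact RingHom.mem_ker.mp (hker (hF a))

section Field

variable {K V W : Type*} [Field K] [AddCommGroup V] [Module K V] [AddCommGroup W] [Module K W]

theorem LinearIndependent.exists_dual_apply_eq_ite {ι : Type*} [DecidableEq ι] {w : ι → W}
    (hw : LinearIndependent K w) :
    ∃ φ : ι → Module.Dual K W, ∀ i j, φ i (w j) = if i = j then 1 else 0 := by
  let b := Module.Basis.span hw
  choose φ hφ using fun i => LinearMap.exists_extend (b.coord i)
  refine ⟨φ, fun i j => ?_⟩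
  have hb : (b j : W) = w j := congrArg Subtype.val (Module.Basis.span_apply hw j)
  have hφb := LinearMap.congr_fun (hφ i) (b j)
  rw [LinearMap.comp_apply, Submodule.coe_subtype, hb] at hφb
  rw [hφb, Module.Basis.coord_apply, b.repr_self, Finsupp.single_apply]
  exact if_congr eq_comm rfl rfl

theorem linearIndependent_iff_exists_dual_det_ne_zero {ι : Type*} [Fintype ι] [DecidableEq ι]
    {w : ι → W} :
    LinearIndependent K w ↔
      ∃ φ : ι → Module.Dual K W, (Matrix.of fun i j => φ i (w j)).det ≠ 0 := by
  refine ⟨fun hw => ?_, fun ⟨φ, hφ⟩ => ?_⟩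
  · obtain ⟨φ, hφ⟩ := hw.exists_dual_apply_eq_ite
    have hone : (Matrix.of fun i j => φ i (w j)) = 1 := by
      ext i j
      exact hφ i j
    exact ⟨φ, by simp [hone]⟩
  · exact .of_comp (LinearMap.pi φ) (Matrix.linearIndependent_cols_of_det_ne_zero hφ)

theorem LinearMap.natCast_le_rank_iff_exists_linearIndependent {f : V →ₗ[K] W} {r : ℕ} :
    (r : Cardinal) ≤ f.rank ↔ ∃ v : Fin r → V, LinearIndependent K (f ∘ v) := by
  constructor
  · rw [LinearMap.le_rank_iff_exists_linearIndependent_finset]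
    rintro ⟨s, hs, hi⟩
    let e : Fin r ≃ (s : Set V) := Fintype.equivOfCardEq (by simp [hs])
    exact ⟨fun j => e j, hi.comp e e.injective⟩
  · rintro ⟨v, hv⟩
    have hv' : LinearIndependent K (f.rangeRestrict ∘ v) :=
      .of_comp (LinearMap.range f).subtype hv
    simpa [LinearMap.rank] using hv'.cardinal_lift_le_rank

theorem LinearMap.natCast_le_rank_iff_exists_dual_det_ne_zero {f : V →ₗ[K] W} {r : ℕ} :
    (r : Cardinal) ≤ f.rank ↔
      ∃ (v : Fin r → V) (φ : Fin r → Module.Dual K W),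
        (Matrix.of fun i j => φ i (f (v j))).det ≠ 0 := by
  simp only [natCast_le_rank_iff_exists_linearIndependent,
    linearIndependent_iff_exists_dual_det_ne_zero, Function.comp_apply]

end Field

section CombinationMinor

variable {K V W ι κ : Type*} [CommRing K] [AddCommGroup V] [Module K V] [AddCommGroup W]
  [Module K W] [Fintype ι] [Fintype κ] [DecidableEq κ]

noncomputable def combinationMinor (M : ι → V →ₗ[K] W) (v : κ → V) (φ : κ → Module.Dual K W) :
    MvPolynomial ι K :=
  (Matrix.of fun i j => ∑ k, X k * C (φ i (M k (v j)))).det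

theorem eval_combinationMinor (M : ι → V →ₗ[K] W) (v : κ → V) (φ : κ → Module.Dual K W)
    (lam : ι → K) :
    eval lam (combinationMinor M v φ) =
      (Matrix.of fun i j => φ i ((∑ k, lam k • M k) (v j))).det := by
  rw [combinationMinor, RingHom.map_det]
  congr 1
  ext i j
  simp [LinearMap.sum_apply]

end CombinationMinor

/-- If a tuple of linear maps `M : Hom(V,W)ˢ` has rank at least `r` (every
nonzero linear combination has rank at least `r`), then there is a
finite-dimensional subspace `U ⊆ V` such that the tuple of restrictions to `U`
still has rank at least `r`. -/
theorem exists_finiteDimensional_restriction_rank_ge {V W : Type*}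
    [AddCommGroup V] [Module ℂ V] [AddCommGroup W] [Module ℂ W] {s : ℕ}
    (M : Fin s → (V →ₗ[ℂ] W)) (r : ℕ)
    (hM : ∀ lam : Fin s → ℂ, lam ≠ 0 →
      (r : Cardinal) ≤ LinearMap.rank (∑ i, lam i • M i)) :
    ∃ U : Submodule ℂ V, FiniteDimensional ℂ U ∧
      ∀ lam : Fin s → ℂ, lam ≠ 0 →
        (r : Cardinal) ≤ LinearMap.rank (∑ i, lam i • (M i ∘ₗ U.subtype)) := by
  obtain ⟨F, hF⟩ := RingHom.exists_finset_forall_map_eq_zero (S := ℂ)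
    fun a : (Fin r → V) × (Fin r → Module.Dual ℂ W) => combinationMinor M a.1 a.2
  let U : Submodule ℂ V := Submodule.span ℂ (⋃ a ∈ F, Set.range a.1)
  refine ⟨U, FiniteDimensional.span_of_finite ℂ
    (F.finite_toSet.biUnion fun a _ => Set.finite_range a.1), fun lam hlam => ?_⟩
  obtain ⟨v, φ, hdet⟩ := LinearMap.natCast_le_rank_iff_exists_dual_det_ne_zero.mp (hM lam hlam)
  obtain ⟨a, haF, ha⟩ : ∃ a ∈ F, eval lam (combinationMinor M a.1 a.2) ≠ 0 := by
    by_contra! hF0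
    exact hdet (by simpa [eval_combinationMinor] using hF (eval lam) hF0 (v, φ))
  refine LinearMap.natCast_le_rank_iff_exists_dual_det_ne_zero.mpr
    ⟨fun j => ⟨a.1 j, Submodule.subset_span (Set.mem_biUnion haF ⟨j, rfl⟩)⟩, a.2, ?_⟩
  simpa [eval_combinationMinor, LinearMap.sum_apply] using ha
end

section
/- Let V, W be ℂ-vector spaces and let M = (M₁,...,Mₛ) ∈ Hom(V,W)ˢ with s ≥ 1. If the rank of M is at least s, then there exists a vector v ∈ V such that the vectors M₁v, ..., Mₛv are linearly independent in W (i.e. the span ⟨M₁v,...,Mₛv⟩ has dimension s). -/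
/-!
Induct on `s`. Given `v₀` with `M₁ v₀, …, Mₛ v₀` independent, either `Mₛ₊₁ v₀` lies outside their
span `W₀`, or `Mₛ₊₁ v₀ = ∑ cᵢ Mᵢ v₀` and `L := Mₛ₊₁ - ∑ cᵢ Mᵢ` kills `v₀`. Since `L` is a nonzero
combination, its rank exceeds `s = dim W₀`, so `L u ∉ W₀` for some `u`. Along `v = v₀ + t u` the
vectors `M₁ v, …, Mₛ v, L v / t = L u` depend affinely on `t` and are independent at `t = 0`;
linear independence being an open condition, they stay independent for some small `t ≠ 0`, and
then `M₁ v, …, Mₛ₊₁ v` are independent.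
-/

open Filter Topology Submodule Set

section

variable {R : Type*} [CommRing R]
  {V W : Type*} [AddCommGroup V] [Module R V] [AddCommGroup W] [Module R W]

theorem exists_apply_notMem_span_of_lt_rank [StrongRankCondition R] {s : ℕ} (L : V →ₗ[R] W)
    (x : Fin s → W) (hL : (s : Cardinal) < L.rank) : ∃ u, L u ∉ span R (range x) := by
  by_contra! h
  have hrange : LinearMap.range L ≤ span R (range x) := by
    rintro _ ⟨u, rfl⟩
    exact h u
  have hx : Cardinal.mk (range x) ≤ s := by simpa using Cardinal.mk_range_le_lift (f := x)
  exact (hL.trans_le ((Submodule.rank_mono hrange).trans ((rank_span_le _).trans hx))).false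

theorem le_rank_sum_smul_castSucc {s : ℕ} {M : Fin (s + 1) → V →ₗ[R] W} {r : Cardinal}
    (hM : ∀ lam : Fin (s + 1) → R, lam ≠ 0 → r ≤ LinearMap.rank (∑ i, lam i • M i))
    (lam : Fin s → R) (hlam : lam ≠ 0) :
    r ≤ LinearMap.rank (∑ i, lam i • M i.castSucc) := by
  have hsnoc : (Fin.snoc lam 0 : Fin (s + 1) → R) ≠ 0 := by
    contrapose! hlam
    funext i
    simpa using congrFun hlam i.castSucc
  simpa [Fin.sum_univ_castSucc] using hM _ hsnoc

end

section

variable {𝕜 : Type*} [NontriviallyNormedField 𝕜] [CompleteSpace 𝕜]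
  {V W : Type*} [AddCommGroup V] [Module 𝕜 V] [AddCommGroup W] [Module 𝕜 W]

theorem LinearIndependent.eventually_add_smul {ι : Type*} [Fintype ι] {w₀ : ι → W}
    (hw₀ : LinearIndependent 𝕜 w₀) (w₁ : ι → W) :
    ∀ᶠ t in 𝓝 (0 : 𝕜), LinearIndependent 𝕜 (w₀ + t • w₁) := by
  classical
  obtain ⟨g, hg⟩ := (Fintype.linearCombination 𝕜 w₀).exists_leftInverse_of_injective
    (LinearMap.ker_eq_bot.mpr
      (linearIndependent_iff_injective_fintypeLinearCombination.mp hw₀))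
  have hgw₀ : g ∘ w₀ = fun i => Pi.single i 1 := by
    funext i
    simpa using LinearMap.congr_fun hg (Pi.single i 1)
  have hline : Tendsto (fun t : 𝕜 => g ∘ w₀ + t • (g ∘ w₁)) (𝓝 0) (𝓝 (g ∘ w₀)) := by
    simpa using tendsto_const_nhds.add ((tendsto_id (α := 𝕜) (x := 𝓝 0)).smul_const (g ∘ w₁))
  have hind : LinearIndependent 𝕜 (g ∘ w₀) := hgw₀ ▸ (Pi.basisFun 𝕜 ι).linearIndependent
  filter_upwards [hline.eventually hind.eventually] with t ht
  refine LinearIndependent.of_comp g ?_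
  have hcomp : g ∘ (w₀ + t • w₁) = g ∘ w₀ + t • (g ∘ w₁) := by
    funext i
    simp
  rw [hcomp]
  exact ht

theorem exists_linearIndependent_apply_and_notMem_span {ι : Type*} [Fintype ι]
    (N : ι → V →ₗ[𝕜] W) (L : V →ₗ[𝕜] W) {v₀ u : V}
    (hv₀ : LinearIndependent 𝕜 fun i => N i v₀) (hLv₀ : L v₀ = 0)
    (hLu : L u ∉ span 𝕜 (range fun i => N i v₀)) :
    ∃ v, LinearIndependent 𝕜 (fun i => N i v) ∧ L v ∉ span 𝕜 (range fun i => N i v) := by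
  let w₀ : Option ι → W := fun o => o.casesOn' (L u) fun i => N i v₀
  let w₁ : Option ι → W := fun o => o.casesOn' 0 fun i => N i u
  have hw₀ : LinearIndependent 𝕜 w₀ := linearIndependent_option'.mpr ⟨hv₀, hLu⟩
  obtain ⟨t, ht, ht0⟩ := ((hw₀.eventually_add_smul w₁).filter_mono nhdsWithin_le_nhds
    |>.and self_mem_nhdsWithin).exists (f := 𝓝[≠] (0 : 𝕜))
  have hline : w₀ + t • w₁ = fun o => o.casesOn' (L u) fun i => N i (v₀ + t • u) := by
    funext o
    cases o <;> simp [w₀, w₁]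
  rw [hline, linearIndependent_option'] at ht
  refine ⟨v₀ + t • u, ht.1, ?_⟩
  rw [map_add, map_smul, hLv₀, zero_add, smul_mem_iff _ ht0]
  exact ht.2

theorem exists_linearIndependent_apply_of_castSucc {s : ℕ} (M : Fin (s + 1) → V →ₗ[𝕜] W)
    (hM : ∀ lam : Fin (s + 1) → 𝕜, lam ≠ 0 →
      ((s + 1 : ℕ) : Cardinal) ≤ LinearMap.rank (∑ i, lam i • M i))
    {v₀ : V} (hv₀ : LinearIndependent 𝕜 fun i : Fin s => M i.castSucc v₀) :
    ∃ v, LinearIndependent 𝕜 fun i => M i v := by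
  simp_rw [linearIndependent_finSucc']
  by_cases hlast : M (Fin.last s) v₀ ∈ span 𝕜 (range fun i : Fin s => M i.castSucc v₀)
  swap
  · exact ⟨v₀, hv₀, hlast⟩
  obtain ⟨c, hc⟩ := (mem_span_range_iff_exists_fun 𝕜).mp hlast
  set L := M (Fin.last s) - ∑ i, c i • M i.castSucc with hL
  have hLv₀ : L v₀ = 0 := by simp [hL, hc]
  have hLrank : ((s + 1 : ℕ) : Cardinal) ≤ L.rank := by
    have hlam : (Fin.snoc (-c) 1 : Fin (s + 1) → 𝕜) ≠ 0 := by
      intro h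
      simpa using congrFun h (Fin.last s)
    convert hM _ hlam using 2
    simp [Fin.sum_univ_castSucc, hL, sub_eq_neg_add]
  obtain ⟨u, hu⟩ := exists_apply_notMem_span_of_lt_rank L _
    ((Nat.cast_lt.mpr s.lt_succ_self).trans_le hLrank)
  obtain ⟨v, hv, hLv⟩ := exists_linearIndependent_apply_and_notMem_span
    (fun i : Fin s => M i.castSucc) L hv₀ hLv₀ hu
  refine ⟨v, hv, fun hmem => hLv ?_⟩
  simp only [hL, LinearMap.sub_apply, LinearMap.coe_sum, Finset.sum_apply,
    LinearMap.smul_apply]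
  exact sub_mem hmem (sum_mem fun i _ => smul_mem _ _ (subset_span ⟨i, rfl⟩))

end

theorem exists_vector_linearIndependent_general {V W : Type*}
    [AddCommGroup V] [Module ℂ V] [AddCommGroup W] [Module ℂ W] {s : ℕ}
    (M : Fin s → (V →ₗ[ℂ] W))
    (hM : ∀ lam : Fin s → ℂ, lam ≠ 0 →
      (s : Cardinal) ≤ LinearMap.rank (∑ i, lam i • M i)) :
    ∃ v : V, LinearIndependent ℂ (fun i : Fin s => M i v) := by
  induction s with
  | zero => exact ⟨0, linearIndependent_empty_type⟩
  | succ s ih =>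
    obtain ⟨v₀, hv₀⟩ := ih (fun i => M i.castSucc) fun lam hlam =>
      (Nat.cast_le.mpr s.le_succ).trans (le_rank_sum_smul_castSucc hM lam hlam)
    exact exists_linearIndependent_apply_of_castSucc M hM hv₀

/-- If a tuple `M = (M₁,...,Mₛ)` of linear maps `V → W` has rank at least `s`
(every nonzero linear combination has rank at least `s`), then there is a
vector `v ∈ V` such that `M₁ v, ..., Mₛ v` are linearly independent. -/
theorem exists_vector_linearIndependent {V W : Type*}
    [AddCommGroup V] [Module ℂ V] [AddCommGroup W] [Module ℂ W] {s : ℕ}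
    (hs : 0 < s) (M : Fin s → (V →ₗ[ℂ] W))
    (hM : ∀ lam : Fin s → ℂ, lam ≠ 0 →
      (s : Cardinal) ≤ LinearMap.rank (∑ i, lam i • M i)) :
    ∃ v : V, LinearIndependent ℂ (fun i : Fin s => M i v) :=
  exists_vector_linearIndependent_general M hM
end

section
/- Let V, W be ℂ-vector spaces, let M = (M₁,...,Mₛ) ∈ Hom(V,W)ˢ with s ≥ 1, and let l be a natural number. If the rank of M is at least l·s, then there exists a subspace V' ⊆ V of dimension l such that the subspace M₁V' + M₂V' + ... + MₛV' of W has dimension l·s. -/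
/-!
Induction on `l`. If `V'` works for `l` and `U = ∑ Mᵢ V'` has dimension `l·s`, then composing
with `W → W ⧸ U` lowers the rank of every combination `∑ λᵢ Mᵢ` by at most `l·s`, so the maps
`W → W ⧸ U` after `Mᵢ` still form a tuple of rank at least `s`. Such a tuple `(N₁, …, Nₛ)` has a
vector `v` with `N₁ v, …, Nₛ v` independent, and `V' + ℂ v` works for `l + 1`.

To find `v`, take `v₀` maximizing `r = dim span {Nᵢ v₀}` and suppose `r < s`, so that some
nonzero `T = ∑ λᵢ Nᵢ` kills `v₀`. If `T v ∉ span {Nᵢ v₀}`, then `T v` together with a basis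
`Nⱼ v₀ (j ∈ J)` of that span is independent, hence so is `T v, Nⱼ (v₀ + t v) (j ∈ J)` for all but
finitely many `t`: perturbing an independent family `a` to `a + t c` creates a dependence only
when `-t⁻¹` is an eigenvalue of a fixed endomorphism. These `r + 1` vectors lie in
`span {Nᵢ (v₀ + t v)}`, contradicting maximality. So `T` has rank at most `r < s`.
-/

open Submodule Module Set

section

variable {K V W : Type*} [Field K] [AddCommGroup V] [Module K V] [AddCommGroup W] [Module K W]

theorem LinearIndependent.finite_setOf_not_linearIndependent_add_smul {κ : Type*} [Finite κ]
    {a : κ → W} (ha : LinearIndependent K a) (c : κ → W) :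
    {t : K | ¬LinearIndependent K (a + t • c)}.Finite := by
  have := Fintype.ofFinite κ
  set A := Fintype.linearCombination K a
  set B := Fintype.linearCombination K c
  obtain ⟨L, hL⟩ := A.exists_leftInverse_of_injective
    (LinearMap.ker_eq_bot.2 ha.fintypeLinearCombination_injective)
  refine ((Module.End.finite_hasEigenvalue (L ∘ₗ B)).image fun μ => -μ⁻¹).subset ?_
  intro t ht
  obtain ⟨x, hx, hx0⟩ : ∃ x, A x + t • B x = 0 ∧ x ≠ 0 := by
    obtain ⟨x, hx, i, hi⟩ := Fintype.not_linearIndependent_iff.1 ht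
    refine ⟨x, ?_, fun h => hi (by simp [h])⟩
    simpa [A, B, Fintype.linearCombination_apply, smul_add, Finset.sum_add_distrib,
      Finset.smul_sum, smul_comm t] using hx
  have hLx : x + t • (L ∘ₗ B) x = 0 := by
    simpa [← LinearMap.comp_apply L A, hL] using congrArg L hx
  have ht0 : t ≠ 0 := by rintro rfl; simp [hx0] at hLx
  have hxB : (L ∘ₗ B) x = -t⁻¹ • x := by
    rw [← inv_smul_smul₀ ht0 ((L ∘ₗ B) x), eq_neg_of_add_eq_zero_right hLx, smul_neg, neg_smul]
  exact ⟨-t⁻¹, Module.End.hasEigenvalue_of_hasEigenvector ⟨by simpa using hxB, hx0⟩, by simp⟩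

theorem LinearIndependent.exists_ne_zero_linearIndependent_add_smul [Infinite K] {κ : Type*}
    [Finite κ] {a : κ → W} (ha : LinearIndependent K a) (c : κ → W) :
    ∃ t : K, t ≠ 0 ∧ LinearIndependent K (a + t • c) := by
  obtain ⟨t, ht⟩ := ((ha.finite_setOf_not_linearIndependent_add_smul c).union
    (finite_singleton (0 : K))).exists_notMem
  simp only [mem_union, mem_ofPred_eq, mem_singleton_iff, not_or, not_not] at ht
  exact ⟨t, ht.2, ht.1⟩

theorem apply_mem_span_of_forall_finrank_le [Infinite K] {ι : Type*} [Finite ι]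
    {N : ι → V →ₗ[K] W} {v₀ : V}
    (hmax : ∀ v, finrank K (span K (range fun i => N i v)) ≤
      finrank K (span K (range fun i => N i v₀)))
    {T : V →ₗ[K] W} (hT : ∀ v, T v ∈ span K (range fun i => N i v)) (hT₀ : T v₀ = 0) (v : V) :
    T v ∈ span K (range fun i => N i v₀) := by
  by_contra hv
  obtain ⟨κ, f, hf, hspan, hli⟩ := exists_linearIndependent' K fun i => N i v₀
  have := Finite.of_injective f hf
  have := Fintype.ofFinite κ
  obtain ⟨t, ht0, htli⟩ := LinearIndependent.exists_ne_zero_linearIndependent_add_smul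
    (hli.option (x := T v) (by rwa [hspan])) fun o => Option.casesOn' o 0 fun k => N (f k) v
  set u : Option κ → W := fun o => Option.casesOn' o (T v) fun k => N (f k) (v₀ + t • v)
  have hu : (fun o => Option.casesOn' o (T v) ((fun i => N i v₀) ∘ f)) +
      t • (fun o => Option.casesOn' o 0 fun k => N (f k) v) = u := by
    ext (_ | k) <;> simp [u]
  rw [hu] at htli
  have hu_le : span K (range u) ≤ span K (range fun i => N i (v₀ + t • v)) := by
    rw [span_le]
    rintro _ ⟨_ | k, rfl⟩
    · have := smul_mem _ t⁻¹ (hT (v₀ + t • v))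
      rwa [map_add, hT₀, zero_add, map_smul, inv_smul_smul₀ ht0] at this
    · exact subset_span ⟨f k, rfl⟩
  have := FiniteDimensional.span_of_finite K (finite_range fun i => N i (v₀ + t • v))
  have hcard := (Submodule.finrank_mono hu_le).trans (hmax (v₀ + t • v))
  rw [finrank_span_eq_card htli, ← hspan, finrank_span_eq_card hli, Fintype.card_option] at hcard
  omega

theorem exists_linearIndependent_apply_of_le_rank [Infinite K] {ι : Type*} [Fintype ι]
    (N : ι → V →ₗ[K] W)
    (hN : ∀ lam : ι → K, lam ≠ 0 → (Fintype.card ι : Cardinal) ≤ (∑ i, lam i • N i).rank) :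
    ∃ v, LinearIndependent K fun i => N i v := by
  set r : V → ℕ := fun v => finrank K (span K (range fun i => N i v))
  obtain ⟨_, ⟨v₀, rfl⟩, hv₀⟩ := BddAbove.exists_isGreatest_of_nonempty
    ⟨Fintype.card ι, forall_mem_range.2 fun v => finrank_range_le_card _⟩ (range_nonempty r)
  refine ⟨v₀, ?_⟩
  by_contra hli
  obtain ⟨lam, hlam, i, hi⟩ := Fintype.not_linearIndependent_iff.1 hli
  set T := ∑ i, lam i • N i
  have hrange : LinearMap.range T ≤ span K (range fun i => N i v₀) := by
    rintro _ ⟨v, rfl⟩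
    refine apply_mem_span_of_forall_finrank_le (fun v => hv₀ ⟨v, rfl⟩) (fun v => ?_)
      (by simpa [T] using hlam) v
    simpa [T] using sum_mem fun i _ => smul_mem _ (lam i) (subset_span (mem_range_self i))
  have hlt : r v₀ < Fintype.card ι :=
    (finrank_range_le_card _).lt_of_ne fun h =>
      hli (linearIndependent_iff_card_eq_finrank_span.2 h.symm)
  have := FiniteDimensional.span_of_finite K (finite_range fun i => N i v₀)
  have hle := (hN lam fun h => hi (by simp [h])).trans
    ((Submodule.rank_mono hrange).trans_eq (finrank_eq_rank K _).symm)
  exact hlt.not_ge (by exact_mod_cast hle)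

theorem LinearMap.rank_le_rank_mkQ_comp_add (T : V →ₗ[K] W) (U : Submodule K W) :
    T.rank ≤ (U.mkQ ∘ₗ T).rank + Module.rank K U := by
  calc T.rank ≤ Module.rank K (comap U.mkQ (LinearMap.range (U.mkQ ∘ₗ T))) :=
        rank_mono (by rw [LinearMap.range_comp]; exact le_comap_map _ _)
    _ ≤ (U.mkQ ∘ₗ T).rank + Module.rank K U := by
        have := LinearMap.lift_rank_comap_le (f := U.mkQ) (LinearMap.range (U.mkQ ∘ₗ T))
        rwa [Cardinal.lift_id, Cardinal.lift_id, Cardinal.lift_id, ker_mkQ] at this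

theorem LinearMap.natCast_le_rank_mkQ_comp {T : V →ₗ[K] W} {U : Submodule K W} {m n : ℕ}
    (hT : ((n + m : ℕ) : Cardinal) ≤ T.rank) (hU : Module.rank K U = n) :
    (m : Cardinal) ≤ (U.mkQ ∘ₗ T).rank := by
  by_contra! h
  obtain ⟨k, hk⟩ := Cardinal.lt_aleph0.1 (h.trans Cardinal.natCast_lt_aleph0)
  have hle := hT.trans (T.rank_le_rank_mkQ_comp_add U)
  rw [hk, hU] at hle
  rw [hk] at h
  norm_cast at h hle
  omega

theorem Submodule.rank_sup_span_range_of_linearIndependent_mkQ {ι : Type*} [Fintype ι]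
    (U : Submodule K W) {f : ι → W} (hf : LinearIndependent K (U.mkQ ∘ f)) :
    Module.rank K ↥(U ⊔ span K (range f)) = Module.rank K U + Fintype.card ι := by
  have hdisj : U ⊓ span K (range f) = ⊥ := by
    simpa [disjoint_iff, inf_comm] using Submodule.range_ker_disjoint hf
  have := FiniteDimensional.span_of_finite K (finite_range f)
  have hspan : Module.rank K (span K (range f)) = Fintype.card ι := by
    rw [← finrank_eq_rank, finrank_span_eq_card (hf.of_comp _)]
  have := rank_sup_add_rank_inf_eq U (span K (range f))
  rwa [hdisj, rank_bot, add_zero, hspan] at this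

theorem Submodule.rank_sup_span_singleton {U : Submodule K V} {v : V} (hv : v ∉ U) :
    Module.rank K ↥(U ⊔ span K {v}) = Module.rank K U + 1 := by
  have hli : LinearIndependent K (U.mkQ ∘ fun _ : Unit => v) := by
    rw [linearIndependent_unique_iff]
    simpa using hv
  have := U.rank_sup_span_range_of_linearIndependent_mkQ hli
  rwa [range_const, Fintype.card_unit, Nat.cast_one] at this

theorem Submodule.iSup_map_sup_span_singleton {ι : Type*} (f : ι → V →ₗ[K] W)
    (U : Submodule K V) (v : V) :
    ⨆ i, (U ⊔ span K {v}).map (f i) = (⨆ i, U.map (f i)) ⊔ span K (range fun i => f i v) := by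
  simp only [Submodule.map_sup, Submodule.map_span, image_singleton, iSup_sup_eq,
    span_range_eq_iSup]

end

/-- If a tuple `M = (M₁,...,Mₛ)` of linear maps `V → W` has rank at least `l·s`,
then there is an `l`-dimensional subspace `V' ⊆ V` such that
`M₁V' + ... + MₛV'` has dimension `l·s`. -/
theorem exists_subspace_free_image {V W : Type*}
    [AddCommGroup V] [Module ℂ V] [AddCommGroup W] [Module ℂ W] {s : ℕ}
    (hs : 0 < s) (l : ℕ) (M : Fin s → (V →ₗ[ℂ] W))
    (hM : ∀ lam : Fin s → ℂ, lam ≠ 0 →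
      ((l * s : ℕ) : Cardinal) ≤ LinearMap.rank (∑ i, lam i • M i)) :
    ∃ V' : Submodule ℂ V, Module.rank ℂ V' = l ∧
      Module.rank ℂ (⨆ i : Fin s, V'.map (M i) : Submodule ℂ W) = l * s := by
  induction l with
  | zero => exact ⟨⊥, by simp, by simp⟩
  | succ l ih =>
    obtain ⟨V', hV', hU⟩ := ih fun lam hlam => le_trans (by gcongr; omega) (hM lam hlam)
    set U := ⨆ i, V'.map (M i)
    obtain ⟨v, hv⟩ := exists_linearIndependent_apply_of_le_rank (fun i => U.mkQ ∘ₗ M i)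
      fun lam hlam => by
        have hcomp : ∑ i, lam i • (U.mkQ ∘ₗ M i) = U.mkQ ∘ₗ ∑ i, lam i • M i := by ext; simp
        rw [Fintype.card_fin, hcomp]
        exact LinearMap.natCast_le_rank_mkQ_comp (Nat.succ_mul l s ▸ hM lam hlam)
          (by exact_mod_cast hU)
    have hvV' : v ∉ V' := fun h => hv.ne_zero ⟨0, hs⟩
      ((Quotient.mk_eq_zero U).2 (mem_iSup_of_mem _ (mem_map_of_mem h)))
    refine ⟨V' ⊔ span ℂ {v}, by rw [rank_sup_span_singleton hvV', hV']; push_cast; rfl, ?_⟩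
    rw [iSup_map_sup_span_singleton, U.rank_sup_span_range_of_linearIndependent_mkQ hv, hU,
      Fintype.card_fin]
    push_cast
    ring
end

section
/- Let N, l be natural numbers with N ≥ l, and let M be an N×N complex matrix whose upper-left l×l block is zero. For λ ∈ ℂ nonzero, let g_λ be the block-diagonal invertible matrix diag(λ⁻¹·Id_l, λ·Id_{N−l}). Write M in block form as [[0, B],[C, D]] with B of size l×(N−l), C of size (N−l)×l, D of size (N−l)×(N−l). Then g_λ M g_λᵀ = [[0, B],[C, λ²D]]. Consequently, the matrix [[0, B],[C, 0]] lies in the Zariski closure of the set { g M gᵀ : g ∈ GL_N(ℂ) }. -/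
open Matrix


private lemma aux_eval_aeval {σ : Type*} (lam : ℂ) (g : σ → Polynomial ℂ)
    (f : MvPolynomial σ ℂ) :
    Polynomial.eval lam (MvPolynomial.aeval g f) =
      MvPolynomial.eval (fun s => Polynomial.eval lam (g s)) f := by
  induction f using MvPolynomial.induction_on with
  | C a => simp
  | add p r hp hr => simp [hp, hr]
  | mul_X p n ih => simp [ih]

/-- Let `M` be an `N × N` complex matrix whose upper-left `l × l` block is
zero, and for `λ ≠ 0` let `g_λ = diag(λ⁻¹ Id_l, λ Id_{N-l})`.  Then
`g_λ M g_λᵀ` keeps the blocks `B` (top-right) and `C` (bottom-left) and scales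
the bottom-right block `D` by `λ²`.  Consequently the matrix obtained from `M`
by replacing `D` with `0` lies in the Zariski closure of the congruence orbit
`{ g M gᵀ : g ∈ GL_N(ℂ) }`. -/
theorem scaling_limit_in_orbit_closure {N l : ℕ} (hl : l ≤ N)
    (M : Matrix (Fin N) (Fin N) ℂ)
    (hM : ∀ i j : Fin N, (i : ℕ) < l → (j : ℕ) < l → M i j = 0) :
    (∀ lam : ℂ, lam ≠ 0 →
      ∀ i j : Fin N,
        (Matrix.diagonal (fun k : Fin N => if (k : ℕ) < l then lam⁻¹ else lam) *
          M *
         (Matrix.diagonal (fun k : Fin N => if (k : ℕ) < l then lam⁻¹ else lam))ᵀ)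
          i j =
        if (i : ℕ) < l ∧ (j : ℕ) < l then 0
        else if (i : ℕ) < l ∨ (j : ℕ) < l then M i j
        else lam ^ 2 * M i j) ∧
    (∀ f : MvPolynomial (Fin N × Fin N) ℂ,
      (∀ g : Matrix (Fin N) (Fin N) ℂ, IsUnit g →
        MvPolynomial.eval (fun p => (g * M * gᵀ) p.1 p.2) f = 0) →
      MvPolynomial.eval
        (fun p => if (p.1 : ℕ) < l ∨ (p.2 : ℕ) < l then M p.1 p.2 else 0)
        f = 0) := by
  have key : ∀ lam : ℂ, lam ≠ 0 →
      ∀ i j : Fin N,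
        (Matrix.diagonal (fun k : Fin N => if (k : ℕ) < l then lam⁻¹ else lam) *
          M *
         (Matrix.diagonal (fun k : Fin N => if (k : ℕ) < l then lam⁻¹ else lam))ᵀ)
          i j =
        if (i : ℕ) < l ∧ (j : ℕ) < l then 0
        else if (i : ℕ) < l ∨ (j : ℕ) < l then M i j
        else lam ^ 2 * M i j := by
    intro lam hlam i j
    rw [Matrix.diagonal_transpose, Matrix.mul_diagonal, Matrix.diagonal_mul]
    by_cases hi : (i : ℕ) < l <;> by_cases hj : (j : ℕ) < l
    · simp [hi, hj, hM i j hi hj]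
    · simp only [hi, hj, if_true, if_false, and_false, true_or, ite_true, ite_false]
      field_simp
    · simp only [hi, hj, if_true, if_false, false_and, or_true, ite_true, ite_false]
      field_simp
    · simp only [hi, hj, if_false, false_and, or_self, ite_false]
      ring
  refine ⟨key, ?_⟩
  intro f hf
  set q : Polynomial ℂ := MvPolynomial.aeval
    (fun pr : Fin N × Fin N => if (pr.1 : ℕ) < l ∨ (pr.2 : ℕ) < l
      then Polynomial.C (M pr.1 pr.2)
      else Polynomial.C (M pr.1 pr.2) * Polynomial.X ^ 2) f with hq
  have heval : ∀ lam : ℂ, Polynomial.eval lam q =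
      MvPolynomial.eval (fun pr : Fin N × Fin N => if (pr.1 : ℕ) < l ∨ (pr.2 : ℕ) < l
        then M pr.1 pr.2 else lam ^ 2 * M pr.1 pr.2) f := by
    intro lam
    rw [hq, aux_eval_aeval]
    have hfn : (fun s : Fin N × Fin N => Polynomial.eval lam
        (if (s.1 : ℕ) < l ∨ (s.2 : ℕ) < l then Polynomial.C (M s.1 s.2)
          else Polynomial.C (M s.1 s.2) * Polynomial.X ^ 2)) =
        (fun pr : Fin N × Fin N => if (pr.1 : ℕ) < l ∨ (pr.2 : ℕ) < l
          then M pr.1 pr.2 else lam ^ 2 * M pr.1 pr.2) := by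
      funext pr
      by_cases h : (pr.1 : ℕ) < l ∨ (pr.2 : ℕ) < l
      · simp [h]
      · rw [if_neg h, if_neg h]
        simp
        ring
    rw [hfn]
  have hzero : ∀ lam : ℂ, lam ≠ 0 → Polynomial.eval lam q = 0 := by
    intro lam hlam
    rw [heval]
    have hunit : IsUnit (Matrix.diagonal (fun k : Fin N => if (k : ℕ) < l then lam⁻¹ else lam)) := by
      rw [Matrix.isUnit_iff_isUnit_det, Matrix.det_diagonal]
      refine isUnit_iff_ne_zero.mpr (Finset.prod_ne_zero_iff.mpr fun k _ => ?_)
      split <;> simp [hlam]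
    have hfun : (fun pr : Fin N × Fin N => if (pr.1 : ℕ) < l ∨ (pr.2 : ℕ) < l
        then M pr.1 pr.2 else lam ^ 2 * M pr.1 pr.2) =
        (fun pr : Fin N × Fin N =>
          ((Matrix.diagonal (fun k : Fin N => if (k : ℕ) < l then lam⁻¹ else lam)) * M *
            (Matrix.diagonal (fun k : Fin N => if (k : ℕ) < l then lam⁻¹ else lam))ᵀ)
            pr.1 pr.2) := by
      funext pr
      rw [key lam hlam pr.1 pr.2]
      by_cases h1 : (pr.1 : ℕ) < l <;> by_cases h2 : (pr.2 : ℕ) < l <;>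
        simp [h1, h2, hM pr.1 pr.2]
    rw [hfun]
    exact hf _ hunit
  have hq0 : q = 0 := by
    apply Polynomial.eq_zero_of_infinite_isRoot
    exact ((Set.finite_singleton (0 : ℂ)).infinite_compl).mono
      (fun lam hlam => hzero lam hlam)
  have hfun0 : (fun p : Fin N × Fin N => if (p.1 : ℕ) < l ∨ (p.2 : ℕ) < l then M p.1 p.2 else 0)
      = (fun pr : Fin N × Fin N => if (pr.1 : ℕ) < l ∨ (pr.2 : ℕ) < l
          then M pr.1 pr.2 else (0 : ℂ) ^ 2 * M pr.1 pr.2) := by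
    funext pr
    by_cases h : (pr.1 : ℕ) < l ∨ (pr.2 : ℕ) < l <;> simp [h]
  rw [hfun0, ← heval 0, hq0, Polynomial.eval_zero]
end

section
/- Let V be a finite-dimensional ℂ-vector space, W a ℂ-vector space, s ≥ 1, and M = (M₁,...,Mₛ) ∈ Hom(V,W)ˢ a tuple with rank at least s (i.e., for every nonzero λ ∈ ℂˢ, rk(∑ᵢλᵢMᵢ) ≥ s). Consider Z = { (v, [λ]) ∈ V × ℙ^{s−1} : ∑ᵢ λᵢ Mᵢ v = 0 }. Then the projection of Z to V is not all of V; in particular there exists v ∈ V with ∑ᵢ λᵢMᵢv ≠ 0 for every nonzero λ ∈ ℂˢ. -/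
open Polynomial Submodule Module

private lemma aux_exists_indep {V W : Type*}
    [AddCommGroup V] [Module ℂ V]
    [AddCommGroup W] [Module ℂ W] {s : ℕ}
    (M : Fin s → (V →ₗ[ℂ] W))
    (hM : ∀ lam : Fin s → ℂ, lam ≠ 0 →
      (s : Cardinal) ≤ LinearMap.rank (∑ i, lam i • M i)) :
    ∃ v : V, LinearIndependent ℂ (fun i => M i v) := by
  classical
  by_contra hno
  push_neg at hno
  set f : V → ℕ := fun v => finrank ℂ (span ℂ (Set.range fun i => M i v)) with hf
  have hfle : ∀ v, f v ≤ s := by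
    intro v
    have h1 := finrank_span_le_card (R := ℂ) (Set.range fun i => M i v)
    refine h1.trans ?_
    rw [Set.toFinset_range]
    exact (Finset.card_image_le).trans (by simp)
  set r : ℕ := Nat.findGreatest (fun n => ∃ v, f v = n) s with hr
  have hPr : ∃ v, f v = r :=
    Nat.findGreatest_spec (P := fun n => ∃ v, f v = n) (m := f 0) (hfle 0) ⟨(0 : V), rfl⟩
  have hmax : ∀ v, f v ≤ r := fun v => Nat.le_findGreatest (hfle v) ⟨v, rfl⟩
  obtain ⟨v₀, hv₀⟩ := hPr
  have hrs : r < s := by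
    rcases lt_or_eq_of_le (Nat.findGreatest_le s : r ≤ s) with h | h
    · exact h
    · exfalso
      apply hno v₀
      rw [linearIndependent_iff_card_eq_finrank_span]
      simp only [Set.finrank]
      rw [← hr] at h
      show Fintype.card (Fin s) = f v₀
      rw [Fintype.card_fin, hv₀, h]
  set U : Submodule ℂ W := span ℂ (Set.range fun i => M i v₀) with hU
  haveI : FiniteDimensional ℂ U :=
    FiniteDimensional.span_of_finite ℂ (Set.finite_range _)
  obtain ⟨B, hBsub, hBspan, hBli⟩ :=
    exists_linearIndependent ℂ (Set.range fun i => M i v₀)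
  haveI : Fintype B := ((Set.finite_range _).subset hBsub).fintype
  have hranB : Set.range (Subtype.val : B → W) = B := Subtype.range_coe
  have hspanB : span ℂ (Set.range (Subtype.val : B → W)) = U := by
    rw [hranB, hBspan]
  let bas : Basis B ℂ U := (Basis.span hBli).map (LinearEquiv.ofEq _ _ hspanB)
  have hcardB : Fintype.card B = r := by
    have h1 := Module.finrank_eq_card_basis bas
    have h2 : f v₀ = finrank ℂ U := rfl
    omega
  -- a nonzero linear relation at v₀
  have hnotli : ¬ LinearIndependent ℂ (fun i => M i v₀) := hno v₀
  obtain ⟨lam, hlam0, i0, hi0⟩ := Fintype.not_linearIndependent_iff.mp hnotli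
  have hlamne : lam ≠ 0 := fun h => hi0 (by rw [h]; rfl)
  set N : V →ₗ[ℂ] W := ∑ i, lam i • M i with hN
  have hNv₀ : N v₀ = 0 := by
    rw [hN]
    simpa [LinearMap.sum_apply, LinearMap.smul_apply] using hlam0
  -- key step : the range of N is contained in U
  have hkey : ∀ w : V, N w ∈ U := by
    intro w
    have hpre : ∀ b : B, ∃ i, M i v₀ = (b : W) := fun b => hBsub b.2
    choose ι hι using hpre
    obtain ⟨U', hcompl⟩ := Submodule.exists_isCompl U
    set π := Submodule.linearProjOfIsCompl U U' hcompl with hπ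
    set Φ : B → (W →ₗ[ℂ] ℂ) := fun c => (bas.coord c).comp π with hΦ
    have hmemU : ∀ b : B, (b : W) ∈ U := fun b => by
      rw [hU, ← hBspan]; exact subset_span b.2
    have hπb : ∀ b : B, π (b : W) = bas b := by
      intro b
      have h1 : π (b : W) = ⟨(b : W), hmemU b⟩ :=
        Submodule.linearProjOfIsCompl_apply_left hcompl ⟨(b : W), hmemU b⟩
      rw [h1]
      apply Subtype.ext
      show (b : W) = _
      rw [show bas b = ((Basis.span hBli).map (LinearEquiv.ofEq _ _ hspanB)) b from rfl,
        Basis.map_apply, LinearEquiv.coe_ofEq_apply, Basis.span_apply]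
    have hΦδ : ∀ c b : B, Φ c (b : W) = if c = b then 1 else 0 := by
      intro c b
      simp only [hΦ, LinearMap.comp_apply]
      rw [hπb b, Basis.coord_apply, Basis.repr_self, Finsupp.single_apply]
      simp [eq_comm]
    set Amat : Matrix B B ℂ[X] :=
      Matrix.of (fun c b => C (Φ c (b : W)) + C (Φ c (M (ι b) w)) * X) with hAmat
    have hAeval : ∀ t : ℂ, (evalRingHom t).mapMatrix Amat
        = Matrix.of (fun c b : B => Φ c (M (ι b) (v₀ + t • w))) := by
      intro t
      ext c b
      simp only [RingHom.mapMatrix_apply, Matrix.map_apply, Matrix.of_apply, coe_evalRingHom,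
        eval_add, eval_mul, eval_C, eval_X, hAmat]
      simp only [map_add, map_smul, smul_eq_mul, hι b]
      ring
    have hdet0 : eval 0 Amat.det = 1 := by
      have h1 : eval 0 Amat.det = ((evalRingHom 0).mapMatrix Amat).det :=
        RingHom.map_det (evalRingHom 0) Amat
      rw [h1, hAeval 0]
      have h2 : Matrix.of (fun c b : B => Φ c (M (ι b) (v₀ + (0:ℂ) • w)))
          = (1 : Matrix B B ℂ) := by
        ext c b
        simp only [Matrix.of_apply, zero_smul, add_zero, hι b, hΦδ c b, Matrix.one_apply]
      rw [h2, Matrix.det_one]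
    have hdetne : Amat.det ≠ 0 := fun h => by simp [h] at hdet0
    set β : B → ℂ := fun c => Φ c (N w) with hβ
    set q : B → ℂ[X] := Amat.adjugate.mulVec (fun c => C (β c)) with hq
    have hpoint : ∀ t : ℂ, t ≠ 0 → eval t Amat.det ≠ 0 →
        (eval t Amat.det) • N w
          = ∑ b : B, eval t (q b) • (M (ι b) (v₀ + t • w)) := by
      intro t ht hdt
      set z : B → W := fun b => M (ι b) (v₀ + t • w) with hz
      set At : Matrix B B ℂ := Matrix.of (fun c b => Φ c (z b)) with hAt
      have hmap : (evalRingHom t).mapMatrix Amat = At := hAeval t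
      have hdeq : eval t Amat.det = At.det := by
        rw [show eval t Amat.det = (evalRingHom t) Amat.det from rfl,
          RingHom.map_det, hmap]
      have hdetAt : At.det ≠ 0 := by rwa [hdeq] at hdt
      have hzli : LinearIndependent ℂ z := by
        rw [Fintype.linearIndependent_iff]
        intro d hd
        have hmv : At.mulVec d = 0 := by
          funext c
          have h3 := congrArg (Φ c) hd
          simpa [Matrix.mulVec, dotProduct, map_sum, map_smul, smul_eq_mul,
            hAt, mul_comm] using h3
        have h4 := Matrix.eq_zero_of_mulVec_eq_zero hdetAt hmv
        exact fun i => congrFun h4 i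
      haveI : FiniteDimensional ℂ (span ℂ (Set.range fun j => M j (v₀ + t • w))) :=
        FiniteDimensional.span_of_finite ℂ (Set.finite_range _)
      have hle : span ℂ (Set.range z) ≤ span ℂ (Set.range fun j => M j (v₀ + t • w)) := by
        rw [span_le]
        rintro x ⟨b, rfl⟩
        exact subset_span ⟨ι b, rfl⟩
      have hfr1 : finrank ℂ (span ℂ (Set.range z)) = r := by
        rw [finrank_span_eq_card hzli, hcardB]
      have heq : span ℂ (Set.range z) = span ℂ (Set.range fun j => M j (v₀ + t • w)) := by
        apply Submodule.eq_of_le_of_finrank_le hle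
        rw [hfr1]
        exact hmax (v₀ + t • w)
      have hNmem : N w ∈ span ℂ (Set.range z) := by
        have h1 : N (v₀ + t • w) ∈ span ℂ (Set.range fun j => M j (v₀ + t • w)) := by
          rw [hN]
          simp only [LinearMap.sum_apply, LinearMap.smul_apply]
          exact sum_mem fun j _ => smul_mem _ _ (subset_span ⟨j, rfl⟩)
        rw [← heq] at h1
        have h2 : N (v₀ + t • w) = t • N w := by
          rw [map_add, hNv₀, map_smul, zero_add]
        rw [h2] at h1
        have h3 := smul_mem (span ℂ (Set.range z)) t⁻¹ h1
        rwa [smul_smul, inv_mul_cancel₀ ht, one_smul] at h3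
      obtain ⟨d, hd⟩ := (mem_span_range_iff_exists_fun ℂ).mp hNmem
      have hAd : At.mulVec d = β := by
        funext c
        have h3 := congrArg (Φ c) hd
        simpa [Matrix.mulVec, dotProduct, map_sum, map_smul, smul_eq_mul,
          hAt, hβ, mul_comm] using h3
      have hadj : (evalRingHom t).mapMatrix Amat.adjugate = At.adjugate := by
        rw [RingHom.map_adjugate, hmap]
      have hqev : ∀ b : B, eval t (q b) = At.det * d b := by
        intro b
        have h1 : eval t (q b) = At.adjugate.mulVec β b := by
          simp only [hq, Matrix.mulVec, dotProduct]
          rw [eval_finset_sum]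
          apply Finset.sum_congr rfl
          intro c _
          rw [eval_mul, eval_C]
          have h2 : eval t (Amat.adjugate b c) = At.adjugate b c := by
            simpa [RingHom.mapMatrix_apply, Matrix.map_apply] using
              congrFun (congrFun hadj b) c
          rw [h2]
        have h2 : At.adjugate.mulVec β = At.det • d := by
          rw [← hAd, Matrix.mulVec_mulVec, Matrix.adjugate_mul,
            Matrix.smul_mulVec, Matrix.one_mulVec]
        rw [h1, h2]
        simp [smul_eq_mul]
      rw [hdeq]
      calc At.det • N w = At.det • ∑ b : B, d b • z b := by rw [hd]
        _ = ∑ b : B, eval t (q b) • z b := by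
            rw [Finset.smul_sum]
            apply Finset.sum_congr rfl
            intro b _
            rw [hqev b, smul_smul]
    have hfinal : ∀ φ : Module.Dual ℂ W,
        φ (N w - ∑ b : B, eval 0 (q b) • (b : W)) = 0 := by
      intro φ
      set P : ℂ[X] := Amat.det * C (φ (N w))
          - ∑ b : B, q b * (C (φ (b : W)) + C (φ (M (ι b) w)) * X) with hP
      have hPt : ∀ t : ℂ, t ≠ 0 → eval t Amat.det ≠ 0 → eval t P = 0 := by
        intro t ht hdt
        have h1 := congrArg φ (hpoint t ht hdt)
        rw [map_smul, map_sum] at h1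
        simp only [map_smul, smul_eq_mul] at h1
        have h2 : ∀ b : B, φ (M (ι b) (v₀ + t • w)) = φ (b : W) + φ (M (ι b) w) * t := by
          intro b
          simp only [map_add, map_smul, smul_eq_mul, hι b]
          ring
        simp only [hP, eval_sub, eval_mul, eval_add, eval_C, eval_X, eval_finset_sum]
        rw [h1, sub_eq_zero]
        exact Finset.sum_congr rfl (fun b _ => by rw [h2 b])
      have hProots : {t : ℂ | P.IsRoot t}.Infinite := by
        have hfin : (({0} : Set ℂ) ∪ {t : ℂ | Amat.det.IsRoot t}).Finite :=
          (Set.finite_singleton 0).union (Polynomial.finite_setOf_isRoot hdetne)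
        have hsub : (({0} : Set ℂ) ∪ {t : ℂ | Amat.det.IsRoot t})ᶜ ⊆ {t : ℂ | P.IsRoot t} := by
          intro t ht
          simp only [Set.mem_compl_iff, Set.mem_union, Set.mem_singleton_iff,
            Set.mem_setOf_eq, not_or] at ht
          exact hPt t ht.1 ht.2
        exact hfin.infinite_compl.mono hsub
      have hP0 : P = 0 := Polynomial.eq_zero_of_infinite_isRoot P hProots
      have h4 : eval 0 P = φ (N w) - ∑ b : B, eval 0 (q b) * φ (b : W) := by
        simp [hP, eval_finset_sum, hdet0]
      rw [map_sub, map_sum]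
      simp only [map_smul, smul_eq_mul]
      rw [← h4, hP0, eval_zero]
    have h5 : N w - ∑ b : B, eval 0 (q b) • (b : W) = 0 := by
      rw [← Module.forall_dual_apply_eq_zero_iff ℂ]
      exact hfinal
    have h6 : N w = ∑ b : B, eval 0 (q b) • (b : W) := by rwa [sub_eq_zero] at h5
    rw [h6]
    exact sum_mem fun b _ => smul_mem _ _ (hmemU b)
  -- conclude : rank N ≤ r < s, contradiction
  have hrange : LinearMap.range N ≤ U := by
    rintro x ⟨w, rfl⟩; exact hkey w
  have hrank : LinearMap.rank N ≤ (r : Cardinal) := by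
    have h1 : LinearMap.rank N ≤ Module.rank ℂ U := Submodule.rank_mono hrange
    have h2 : Module.rank ℂ U = (r : Cardinal) := by
      rw [← Module.finrank_eq_rank ℂ U]
      norm_cast
    rwa [h2] at h1
  have hcon := (hM lam hlamne).trans hrank
  rw [Nat.cast_le] at hcon
  omega

/-- Let `V` be finite-dimensional and `M = (M₁,...,Mₛ)` a tuple of linear maps
`V → W` of rank at least `s` (every nonzero linear combination has rank at
least `s`).  Then the projection to `V` of the incidence variety
`Z = {(v,[λ]) : ∑ λᵢ Mᵢ v = 0}` is not all of `V`; in particular there is a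
`v ∈ V` with `∑ λᵢ Mᵢ v ≠ 0` for every nonzero `λ`. -/
theorem incidence_projection_not_surjective {V W : Type*}
    [AddCommGroup V] [Module ℂ V] [FiniteDimensional ℂ V]
    [AddCommGroup W] [Module ℂ W] {s : ℕ} (hs : 0 < s)
    (M : Fin s → (V →ₗ[ℂ] W))
    (hM : ∀ lam : Fin s → ℂ, lam ≠ 0 →
      (s : Cardinal) ≤ LinearMap.rank (∑ i, lam i • M i)) :
    {v : V | ∃ lam : Fin s → ℂ, lam ≠ 0 ∧ (∑ i, lam i • M i) v = 0} ≠
        Set.univ ∧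
      ∃ v : V, ∀ lam : Fin s → ℂ, lam ≠ 0 → (∑ i, lam i • M i) v ≠ 0 := by
  obtain ⟨v, hv⟩ := aux_exists_indep M hM
  have hgood : ∀ lam : Fin s → ℂ, lam ≠ 0 → (∑ i, lam i • M i) v ≠ 0 := by
    intro lam hlam h
    apply hlam
    have h' : ∑ i, lam i • M i v = 0 := by
      simpa [LinearMap.sum_apply, LinearMap.smul_apply] using h
    funext i
    exact (Fintype.linearIndependent_iff.mp hv) lam h' i
  refine ⟨?_, v, hgood⟩
  intro h
  have : v ∈ {v : V | ∃ lam : Fin s → ℂ, lam ≠ 0 ∧ (∑ i, lam i • M i) v = 0} := by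
    rw [h]; trivial
  obtain ⟨lam, hlam, hz⟩ := this
  exact hgood lam hlam hz
end

section
/- Let N, l, s be natural numbers with N ≥ (s+1)l, and let M = (M₁,...,Mₛ) be a tuple of N×N complex matrices, each symmetric or skew-symmetric, such that there is a subspace V ⊆ ℂᴺ of dimension 2ˢl with dim(M₁V + ... + MₛV) = s·2ˢl. Then there exists g ∈ GL_N(ℂ) such that for each i, the matrix gMᵢgᵀ has its upper-left l×l block equal to zero and, writing gMᵢgᵀ in block rows of heights l, l, ..., l (s+1 blocks) and N−(s+1)l, the first l columns of gMᵢgᵀ consist of the block column (0_l, δ_{1,i}Id_l, δ_{2,i}Id_l, ..., δ_{s,i}Id_l, 0). -/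
/-!
Each form `(x, y) ↦ x ⬝ᵥ Mᵢ *ᵥ y` is reflexive, and over `ℂ` every quadratic form in two or more
variables has a nonzero zero; hence every `2m`-dimensional subspace contains an `m`-dimensional
totally isotropic one, and halving `V` once per form gives an `l`-dimensional `W ≤ V` isotropic
for all the `Mᵢ`. The dimension hypothesis says that `(xᵢ) ↦ ∑ Mᵢ xᵢ` is injective on `Vˢ`, so for
a basis `(w_b)` of `W` the `s * l` vectors `Mᵢ w_b` are independent. Let the rows of `g` be the
`w_b`, vectors dual to the `Mᵢ w_b`, and a completion of the `w_b` to a basis of the annihilator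
of the `Mᵢ w_b`. The entry `(a, b)` of `g Mᵢ gᵀ` with `b < l` is `row_a ⬝ᵥ Mᵢ *ᵥ w_b`, which is the
prescribed Kronecker delta.
-/

open Matrix Module LinearMap Submodule Polynomial

theorem Module.Basis.sumExtend_apply_inl {K E ι : Type*} [Field K] [AddCommGroup E] [Module K E]
    {v : ι → E} (hv : LinearIndependent K v) (i : ι) :
    Basis.sumExtend hv (.inl i) = v i := by
  classical
  simp only [Basis.sumExtend, Basis.reindex_apply, Basis.coe_extend]
  erw [Equiv.symm_symm, Equiv.trans_apply, Equiv.sumCongr_apply, Sum.map_inl,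
    Equiv.Set.sumDiffSubset_apply_inl]
  rfl

variable {K E : Type*} [Field K] [AddCommGroup E] [Module K E]

theorem exists_linearIndependent_sum_elim_of_mem {ι : Type*} [Fintype ι] (p : Submodule K E)
    [FiniteDimensional K p] {w : ι → E} (hw : LinearIndependent K w) (hwp : ∀ i, w i ∈ p)
    {m : ℕ} (hm : finrank K p = Fintype.card ι + m) :
    ∃ c : Fin m → E, (∀ j, c j ∈ p) ∧ LinearIndependent K (Sum.elim w c) := by
  let w' : ι → p := fun i => ⟨w i, hwp i⟩
  have hw' : LinearIndependent K w' := .of_comp p.subtype hw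
  let b := Basis.sumExtend hw'
  have := Module.Finite.finite_basis b
  have := Finite.sum_right ι (β := Basis.sumExtendIndex hw')
  have hcard : Nat.card (Basis.sumExtendIndex hw') = m := by
    rw [finrank_eq_nat_card_basis b, Nat.card_sum, Nat.card_eq_fintype_card] at hm; omega
  let e := Finite.equivFinOfCardEq hcard
  refine ⟨fun j => b (.inr (e.symm j)), fun j => (b _).2, ?_⟩
  have : Sum.elim w (fun j => (b (.inr (e.symm j)) : E)) =
      p.subtype ∘ b ∘ (Equiv.refl ι).sumCongr e.symm := by
    ext (i | j) <;> simp [b, Basis.sumExtend_apply_inl, w']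
  rw [this]
  exact (b.linearIndependent.comp _ (Equiv.injective _)).map' _ p.ker_subtype

theorem LinearIndependent.sum_elim_of_mem_ker {G α β : Type*} [AddCommGroup G] [Module K G]
    (F : E →ₗ[K] G) {f : α → E} {u : β → E} (hf : LinearIndependent K f)
    (hfF : ∀ a, f a ∈ ker F) (hu : LinearIndependent K (F ∘ u)) :
    LinearIndependent K (Sum.elim f u) :=
  hf.sum_type (.of_comp F hu) <| (Submodule.range_ker_disjoint hu).symm.mono_left <|
    span_le.2 <| Set.range_subset_iff.2 hfF

theorem finrank_le_finrank_inf_ker_add_one [FiniteDimensional K E] (p : Submodule K E)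
    (f : E →ₗ[K] K) : finrank K p ≤ finrank K ↥(p ⊓ ker f) + 1 := by
  have h₁ := finrank_sup_add_finrank_inf_eq p (ker f)
  have h₂ := finrank_range_add_finrank_ker f
  have h₃ := Submodule.finrank_le (p ⊔ ker f)
  have h₄ : finrank K (range f) ≤ 1 := (Submodule.finrank_le _).trans (by simp)
  omega

theorem linearIndependent_apply_of_finrank_iSup_map {F ι κ : Type*} [AddCommGroup F] [Module K F]
    [Fintype ι] [DecidableEq ι] (f : ι → E →ₗ[K] F) (V : Submodule K E)
    [FiniteDimensional K V]
    (hV : finrank K ↥(⨆ i, V.map (f i)) = Fintype.card ι * finrank K V)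
    {w : κ → E} (hw : LinearIndependent K w) (hwV : ∀ b, w b ∈ V) :
    LinearIndependent K (fun p : ι × κ => f p.1 (w p.2)) := by
  let Φ : (ι → V) →ₗ[K] F := lsum K (fun _ => V) K fun i => f i ∘ₗ V.subtype
  have hΦ : ∀ i (x : V), Φ (Pi.single i x) = f i x := by
    intro i x
    simp only [Φ, lsum_apply, LinearMap.sum_apply]
    rw [Finset.sum_eq_single i (fun j _ hj => by simp [hj]) (by simp)]
    simp
  have hrange : ⨆ i, V.map (f i) ≤ range Φ := by
    refine iSup_le fun i => ?_
    rintro _ ⟨x, hx, rfl⟩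
    exact ⟨Pi.single i ⟨x, hx⟩, hΦ i _⟩
  have hker : ker Φ = ⊥ := by
    have h₁ := Submodule.finrank_mono hrange
    have h₂ := finrank_range_add_finrank_ker Φ
    rw [finrank_pi_fintype, Finset.sum_const, smul_eq_mul, Finset.card_univ] at h₂
    exact Submodule.finrank_eq_zero.1 (by omega)
  let w' : κ → V := fun b => ⟨w b, hwV b⟩
  have hsingle : LinearIndependent K fun p : ι × κ => (Pi.single p.1 (w' p.2) : ι → V) :=
    (Pi.linearIndependent_single (Ms := fun _ => V) (fun _ => w')
      fun _ => .of_comp V.subtype hw).comp (Equiv.sigmaEquivProd ι κ).symm (Equiv.injective _)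
  have : (fun p : ι × κ => f p.1 (w p.2)) = Φ ∘ fun p => Pi.single p.1 (w' p.2) :=
    funext fun p => (hΦ p.1 (w' p.2)).symm
  rw [this]
  exact hsingle.map' Φ hker

section IsAlgClosed

variable [IsAlgClosed K]

theorem LinearMap.BilinForm.exists_ne_zero_apply_self_eq_zero (B : LinearMap.BilinForm K E)
    (hE : 1 < finrank K E) : ∃ v ≠ 0, B v v = 0 := by
  have : Nontrivial E := Module.nontrivial_of_finrank_pos (R := K) (by omega)
  obtain ⟨x, hx⟩ := exists_ne (0 : E)
  obtain ⟨y, hxy⟩ := exists_linearIndependent_pair_of_one_lt_finrank hE hx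
  by_cases hxx : B x x = 0
  · exact ⟨x, hx, hxx⟩
  -- `B (t • x + y) (t • x + y)` is a quadratic polynomial in `t` with leading coefficient `B x x`.
  obtain ⟨t, ht⟩ := IsAlgClosed.exists_root
    (C (B x x) * X ^ 2 + C (B x y + B y x) * X + C (B y y)) (by rw [degree_quadratic hxx]; decide)
  have htxy : t • x + y ≠ 0 := fun h =>
    one_ne_zero (LinearIndependent.pair_iff.1 hxy t 1 (by simpa using h)).2
  refine ⟨t • x + y, htxy, ?_⟩
  simp only [IsRoot, eval_add, eval_mul, eval_C, eval_pow, eval_X] at ht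
  simp only [map_add, map_smul, LinearMap.add_apply, LinearMap.smul_apply, smul_eq_mul]
  linear_combination ht

theorem LinearMap.BilinForm.exists_isotropic_submodule [FiniteDimensional K E]
    {B : LinearMap.BilinForm K E} (hB : B.IsRefl) (m : ℕ) (V : Submodule K E)
    (hV : 2 * m ≤ finrank K V) :
    ∃ W ≤ V, finrank K W = m ∧ ∀ x ∈ W, ∀ y ∈ W, B x y = 0 := by
  induction m generalizing V with
  | zero => exact ⟨⊥, bot_le, finrank_bot K E, by simp⟩
  | succ m ih =>
    obtain ⟨⟨v, hvV⟩, hv, hvv⟩ :=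
      exists_ne_zero_apply_self_eq_zero (B.compl₁₂ V.subtype V.subtype) (by omega)
    replace hv : v ≠ 0 := by simpa using hv
    -- Cutting down by `ker φ` keeps `v` out of the smaller isotropic subspace.
    obtain ⟨φ, hφ⟩ := Projective.exists_dual_ne_zero K hv
    have h₁ := finrank_le_finrank_inf_ker_add_one V (B v)
    have h₂ := finrank_le_finrank_inf_ker_add_one (V ⊓ ker (B v)) φ
    obtain ⟨W, hWD, hWm, hW⟩ := ih (V ⊓ ker (B v) ⊓ ker φ) (by omega)
    have hv_notMem : v ∉ W := fun h => hφ (hWD h).2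
    refine ⟨W ⊔ span K {v}, sup_le (hWD.trans (inf_le_left.trans inf_le_left))
      ((span_singleton_le_iff_mem _ _).2 hvV),
      by rw [finrank_sup_span_singleton hv_notMem, hWm], ?_⟩
    have hvW : ∀ x ∈ W, B v x = 0 := fun x hx => (hWD hx).1.2
    rintro _ hx _ hy
    obtain ⟨x, hxW, _, hx', rfl⟩ := mem_sup.1 hx
    obtain ⟨y, hyW, _, hy', rfl⟩ := mem_sup.1 hy
    obtain ⟨a, rfl⟩ := mem_span_singleton.1 hx'
    obtain ⟨b, rfl⟩ := mem_span_singleton.1 hy'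
    simp only [map_add, map_smul, LinearMap.add_apply, LinearMap.smul_apply, hW x hxW y hyW,
      hvW y hyW, hB _ _ (hvW x hxW), show B v v = 0 from hvv, smul_zero, add_zero]

theorem LinearMap.BilinForm.exists_common_isotropic_submodule [FiniteDimensional K E] {s : ℕ}
    {B : Fin s → LinearMap.BilinForm K E} (hB : ∀ i, (B i).IsRefl) (l : ℕ) (V : Submodule K E)
    (hV : finrank K V = 2 ^ s * l) :
    ∃ W ≤ V, finrank K W = l ∧ ∀ i, ∀ x ∈ W, ∀ y ∈ W, B i x y = 0 := by
  induction s generalizing V with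
  | zero => exact ⟨V, le_rfl, by simpa using hV, fun i => i.elim0⟩
  | succ s ih =>
    obtain ⟨V', hV'V, hV', hB₀⟩ :=
      exists_isotropic_submodule (hB 0) (2 ^ s * l) V (by rw [hV, pow_succ]; linarith)
    obtain ⟨W, hWV', hW, hBs⟩ := ih (fun i => hB i.succ) V' hV'
    exact ⟨W, hWV'.trans hV'V, hW,
      Fin.cases (fun x hx y hy => hB₀ x (hWV' hx) y (hWV' hy)) hBs⟩

end IsAlgClosed

namespace Matrix

variable {n : Type*} [Fintype n]

theorem mulVec_surjective_of_linearIndependent_row {m : Type*} [Fintype m] {A : Matrix m n K}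
    (hA : LinearIndependent K A.row) : Function.Surjective A.mulVec := by
  have : range A.mulVecLin = ⊤ := by
    apply Submodule.eq_top_of_finrank_eq
    rw [← Matrix.rank, hA.rank_matrix, finrank_fintype_fun_eq_card]
  exact range_eq_top.1 this

theorem isRefl_toBilin' [DecidableEq n] {A : Matrix n n K} (hA : A.IsSymm ∨ Aᵀ = -A) :
    (toBilin' A).IsRefl := by
  intro x y h
  have hswap : y ⬝ᵥ A *ᵥ x = x ⬝ᵥ Aᵀ *ᵥ y := by
    rw [mulVec_transpose, dotProduct_mulVec, dotProduct_comm]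
  rw [toBilin'_apply'] at h ⊢
  rcases hA with hA | hA
  · rwa [hswap, hA.eq]
  · rw [hswap, hA, neg_mulVec, dotProduct_neg, h, neg_zero]

theorem mul_mul_transpose_apply {R : Type*} [CommSemiring R] (g A : Matrix n n R) (a b : n) :
    (g * A * gᵀ) a b = g a ⬝ᵥ A *ᵥ g b := by
  simp only [mul_apply, transpose_apply, dotProduct, mulVec, Finset.mul_sum, Finset.sum_mul]
  rw [Finset.sum_comm]
  simp only [mul_comm, mul_left_comm]

theorem exists_linearIndependent_sum_elim_mulVec_eq {ι κ : Type*} [Fintype ι] [DecidableEq ι]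
    [Fintype κ] [DecidableEq κ] {Y : Matrix ι n K} (hY : LinearIndependent K Y.row)
    {w : κ → n → K} (hw : LinearIndependent K w) (hYw : ∀ b, Y *ᵥ w b = 0) {m : ℕ}
    (hm : Fintype.card n = Fintype.card ι + Fintype.card κ + m) :
    ∃ r : (κ ⊕ Fin m) ⊕ ι → n → K, LinearIndependent K r ∧
      (∀ b, r (.inl (.inl b)) = w b) ∧ ∀ t p, (Y *ᵥ r t) p = if t = .inr p then 1 else 0 := by
  choose u hu using fun p => mulVec_surjective_of_linearIndependent_row hY (Pi.single p 1)
  have hK : finrank K (ker Y.mulVecLin) = Fintype.card κ + m := by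
    have := finrank_range_add_finrank_ker Y.mulVecLin
    rw [← Matrix.rank, hY.rank_matrix, finrank_fintype_fun_eq_card] at this
    omega
  obtain ⟨c, hcY, hwc⟩ := exists_linearIndependent_sum_elim_of_mem _ hw hYw hK
  have hu_indep : LinearIndependent K (Y.mulVecLin ∘ u) := by
    rw [show Y.mulVecLin ∘ u = Pi.basisFun K ι from funext fun p => by simp [hu]]
    exact (Pi.basisFun K ι).linearIndependent
  refine ⟨Sum.elim (Sum.elim w c) u, hwc.sum_elim_of_mem_ker Y.mulVecLin
    (Sum.forall.2 ⟨hYw, hcY⟩) hu_indep, fun _ => rfl, ?_⟩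
  rintro ((b | j) | q) p
  · simpa using congrFun (hYw b) p
  · simpa using congrFun (hcY j) p
  · simp [hu, Pi.single_apply, eq_comm]

end Matrix

/-- Position `b` for `inl (inl b)`, position `(i + 1) * l + b` for `inr (i, b)`, and the last
`m` positions for `inl (inr j)`. -/
def blockEquiv {N : ℕ} (l s m : ℕ) (h : l + s * l + m = N) :
    (Fin l ⊕ Fin m) ⊕ Fin s × Fin l ≃ Fin N :=
  (Equiv.sumAssoc _ _ _).trans <| ((Equiv.refl _).sumCongr (Equiv.sumComm _ _)).trans <|
    (Equiv.sumAssoc _ _ _).symm.trans <|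
      ((((Equiv.refl _).sumCongr finProdFinEquiv).trans finSumFinEquiv).sumCongr
        (Equiv.refl _)).trans <| finSumFinEquiv.trans (finCongr h)

theorem blockEquiv_symm_apply_of_lt {N l s m : ℕ} (h : l + s * l + m = N) {b : Fin N}
    (hb : (b : ℕ) < l) : (blockEquiv l s m h).symm b = .inl (.inl ⟨b, hb⟩) :=
  (Equiv.symm_apply_eq _).2 <| Fin.ext <| by simp [blockEquiv]

theorem blockEquiv_symm_apply_eq_inr_iff {N l s m : ℕ} (h : l + s * l + m = N) (a : Fin N)
    (p : Fin s × Fin l) :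
    (blockEquiv l s m h).symm a = .inr p ↔ (a : ℕ) = (p.1 + 1) * l + p.2 := by
  rw [Equiv.symm_apply_eq, Fin.ext_iff]
  simp [blockEquiv]
  ring_nf

/-- Let `M = (M₁,...,Mₛ)` be a tuple of `N × N` complex matrices, each
symmetric or skew-symmetric, and suppose there is a subspace `V ⊆ ℂᴺ` of
dimension `2ˢl` with `dim(M₁V + ... + MₛV) = s·2ˢl`.  Then there is an
invertible `g` such that for each `i` the first `l` columns of `g Mᵢ gᵀ` form
the block column `(0_l, δ_{1,i}Id_l, ..., δ_{s,i}Id_l, 0)` (block rows of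
heights `l,...,l` (`s+1` of them) and `N-(s+1)l`); in particular the
upper-left `l × l` block of each `g Mᵢ gᵀ` is zero. -/
theorem exists_congruence_normalizing_first_columns {N l s : ℕ}
    (hN : (s + 1) * l ≤ N) (M : Fin s → Matrix (Fin N) (Fin N) ℂ)
    (hM : ∀ i, (M i).IsSymm ∨ (M i)ᵀ = -(M i))
    (V : Submodule ℂ (Fin N → ℂ))
    (hV : Module.finrank ℂ V = 2 ^ s * l)
    (hMV : Module.finrank ℂ
        (⨆ i : Fin s, V.map (M i).mulVecLin : Submodule ℂ (Fin N → ℂ)) =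
      s * (2 ^ s * l)) :
    ∃ g : Matrix (Fin N) (Fin N) ℂ, IsUnit g ∧
      ∀ (i : Fin s) (a b : Fin N), (b : ℕ) < l →
        (g * M i * gᵀ) a b =
          if (a : ℕ) = ((i : ℕ) + 1) * l + (b : ℕ) then 1 else 0 := by
  obtain ⟨W, hWV, hWl, hWiso⟩ := LinearMap.BilinForm.exists_common_isotropic_submodule
    (fun i => isRefl_toBilin' (hM i)) l V hV
  let bW := finBasisOfFinrankEq ℂ W hWl
  let w : Fin l → Fin N → ℂ := fun b => bW b
  have hw : LinearIndependent ℂ w := bW.linearIndependent.map' W.subtype W.ker_subtype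
  let Y : Matrix (Fin s × Fin l) (Fin N) ℂ := of fun p => M p.1 *ᵥ w p.2
  have hY : LinearIndependent ℂ Y.row := linearIndependent_apply_of_finrank_iSup_map
    (fun i => (M i).mulVecLin) V (by rw [hMV, hV, Fintype.card_fin]) hw fun b => hWV (bW b).2
  have hYw : ∀ b, Y *ᵥ w b = 0 := fun b => funext fun p => by
    change (M p.1 *ᵥ w p.2) ⬝ᵥ w b = 0
    rw [dotProduct_comm, ← toBilin'_apply']
    exact hWiso p.1 _ (bW b).2 _ (bW p.2).2
  obtain ⟨m, hm⟩ : ∃ m, l + s * l + m = N := ⟨N - (s + 1) * l, by have := add_one_mul s l; omega⟩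
  obtain ⟨r, hr, hrw, hYr⟩ := exists_linearIndependent_sum_elim_mulVec_eq hY hw hYw
    (m := m) (by simp only [Fintype.card_fin, Fintype.card_prod]; omega)
  refine ⟨of (r ∘ (blockEquiv l s _ hm).symm),
    linearIndependent_rows_iff_isUnit.1 (hr.comp _ (Equiv.injective _)), fun i a b hb => ?_⟩
  have := hYr ((blockEquiv l s _ hm).symm a) (i, ⟨b, hb⟩)
  simp only [blockEquiv_symm_apply_eq_inr_iff] at this
  rw [mul_mul_transpose_apply, ← this]
  change r _ ⬝ᵥ M i *ᵥ r _ = _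
  rw [blockEquiv_symm_apply_of_lt hm hb, hrw, dotProduct_comm]
  rfl
end
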